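/- Let γ_n : S¹ → ℂ be a sequence of Jordan curves converging uniformly to a Jordan curve γ, and let Q_n be a θ-rectangle inscribed in γ_n for each n. Then there is a subsequence along which the vertex sets of Q_n converge (in the Hausdorff metric on compact subsets of ℂ) to a set of at most 4 points contained in γ, which is either a single point or the vertex set of a θ-rectangle inscribed in γ. -/

import Mathlib

open Complex

/-- The vertex set of the θ-rectangle with diagonal endpoints z, w:
{z, w, m + e^{iθ}(z−m), m + e^{iθ}(w−m)} with m = (z+w)/2. -/
noncomputable def rectVertices (θ : ℝ) (z w : ℂ) : Set ℂ :=
  {z, w, (z + w) / 2 + Complex.exp ((θ : ℂ) * I) * (z - (z + w) / 2),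
         (z + w) / 2 + Complex.exp ((θ : ℂ) * I) * (w - (z + w) / 2)}

/-!
The vertices of a θ-rectangle depend 1-Lipschitz-wise (in the sum metric) on the diagonal
endpoints, so convergence of the endpoints gives Hausdorff convergence of the vertex sets.
The endpoints eventually lie near the compact curve `γ`, so a subsequence converges. Every limit
of points of `γₙ` lies on `γ`: a point `γₙ(xₙ)` is uniformly close to `γ(xₙ)`, and the range
of `γ` is closed.
-/

open Filter Topology Uniformity Metric Set

theorem TendstoUniformly.eventually_range_subset_thickening {ι α β : Type*}
    [PseudoMetricSpace β] {F : ι → α → β} {f : α → β} {p : Filter ι}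
    (hF : TendstoUniformly F f p) {ε : ℝ} (hε : 0 < ε) :
    ∀ᶠ i in p, range (F i) ⊆ thickening ε (range f) := by
  filter_upwards [Metric.tendstoUniformly_iff.1 hF ε hε] with i hi
  rintro _ ⟨x, rfl⟩
  exact mem_thickening_iff.2 ⟨f x, mem_range_self x, by rw [dist_comm]; exact hi x⟩

theorem TendstoUniformly.mem_closure_range_of_tendsto {ι κ α β : Type*} [UniformSpace β]
    {F : ι → α → β} {f : α → β} {p : Filter ι} {l : Filter κ} [l.NeBot] {φ : κ → ι}
    {u : κ → β} {a : β} (hF : TendstoUniformly F f p) (hφ : Tendsto φ l p)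
    (hu : Tendsto u l (𝓝 a)) (hmem : ∀ k, u k ∈ range (F (φ k))) :
    a ∈ closure (range f) := by
  choose x hx using hmem
  have hclose : Tendsto (fun k => (f (x k), u k)) l (𝓤 β) := by
    simp only [← hx]
    exact (tendstoUniformly_iff_tendsto.1 hF).comp (hφ.prodMk tendsto_top)
  exact mem_closure_of_tendsto ((Uniform.tendsto_congr hclose).2 hu)
    (.of_forall fun k => mem_range_self (x k))

theorem dist_midpoint_add_mul_le {e : ℂ} (he : ‖e‖ ≤ 1) (a b a' b' : ℂ) :
    dist ((a + b) / 2 + e * (a - (a + b) / 2)) ((a' + b') / 2 + e * (a' - (a' + b') / 2))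
      ≤ dist a a' + dist b b' := by
  have hcoef : ∀ s : ℂ, ‖s‖ ≤ 1 → ‖(1 + s) / 2‖ ≤ 1 := fun s hs => by
    rw [norm_div, Complex.norm_ofNat, div_le_one two_pos]
    exact (norm_add_le _ _).trans (by rw [norm_one]; linarith)
  calc _ = ‖(1 + e) / 2 * (a - a') + (1 + -e) / 2 * (b - b')‖ := by
        rw [dist_eq_norm]; congr 1; ring
    _ ≤ ‖(1 + e) / 2‖ * ‖a - a'‖ + ‖(1 + -e) / 2‖ * ‖b - b'‖ :=
        norm_add_le_of_le (norm_mul_le _ _) (norm_mul_le _ _)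
    _ ≤ 1 * ‖a - a'‖ + 1 * ‖b - b'‖ := by
        gcongr
        exacts [hcoef e he, hcoef (-e) (by rwa [norm_neg])]
    _ = dist a a' + dist b b' := by simp only [one_mul, dist_eq_norm]

section RectVertices

variable (θ : ℝ)

@[simp]
theorem rectVertices_self (z : ℂ) : rectVertices θ z z = {z} := by
  simp [rectVertices, add_self_div_two]

theorem exists_mem_rectVertices_dist_le (z w z' w' : ℂ) :
    ∀ x ∈ rectVertices θ z w, ∃ y ∈ rectVertices θ z' w',
      dist x y ≤ dist z z' + dist w w' := by
  have he : ‖exp ((θ : ℂ) * I)‖ ≤ 1 := (norm_exp_ofReal_mul_I θ).le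
  have hz : 0 ≤ dist z z' := dist_nonneg
  have hw : 0 ≤ dist w w' := dist_nonneg
  rintro x (rfl | rfl | rfl | rfl)
  · exact ⟨z', .inl rfl, by linarith⟩
  · exact ⟨w', .inr (.inl rfl), by linarith⟩
  · exact ⟨_, .inr (.inr (.inl rfl)), dist_midpoint_add_mul_le he z w z' w'⟩
  · refine ⟨_, .inr (.inr (.inr rfl)), ?_⟩
    have := dist_midpoint_add_mul_le he w z w' z'
    rwa [add_comm w z, add_comm w' z', add_comm (dist w w')] at this

theorem hausdorffDist_rectVertices_le (z w z' w' : ℂ) :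
    hausdorffDist (rectVertices θ z w) (rectVertices θ z' w') ≤ dist z z' + dist w w' := by
  refine hausdorffDist_le_of_mem_dist (by positivity)
    (exists_mem_rectVertices_dist_le θ z w z' w') fun x hx => ?_
  obtain ⟨y, hy, hd⟩ := exists_mem_rectVertices_dist_le θ z' w' z w x hx
  exact ⟨y, hy, by rwa [dist_comm z' z, dist_comm w' w] at hd⟩

variable {κ : Type*} {l : Filter κ} {z w : κ → ℂ} {z₀ w₀ : ℂ}

theorem tendsto_hausdorffDist_rectVertices (hz : Tendsto z l (𝓝 z₀))
    (hw : Tendsto w l (𝓝 w₀)) :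
    Tendsto (fun k => hausdorffDist (rectVertices θ (z k) (w k)) (rectVertices θ z₀ w₀))
      l (𝓝 0) := by
  refine squeeze_zero (fun _ => hausdorffDist_nonneg)
    (fun k => hausdorffDist_rectVertices_le θ (z k) (w k) z₀ w₀) ?_
  simpa using (tendsto_iff_dist_tendsto_zero.1 hz).add (tendsto_iff_dist_tendsto_zero.1 hw)

theorem rectVertices_subset_closure_range {ι α : Type*} [l.NeBot] {F : ι → α → ℂ}
    {f : α → ℂ} {p : Filter ι} {φ : κ → ι} (hF : TendstoUniformly F f p)
    (hφ : Tendsto φ l p) (hz : Tendsto z l (𝓝 z₀)) (hw : Tendsto w l (𝓝 w₀))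
    (hins : ∀ k, rectVertices θ (z k) (w k) ⊆ range (F (φ k))) :
    rectVertices θ z₀ w₀ ⊆ closure (range f) := by
  intro v hv
  choose y hy hdist using fun k => exists_mem_rectVertices_dist_le θ z₀ w₀ (z k) (w k) v hv
  refine hF.mem_closure_range_of_tendsto hφ ?_ fun k => hins k (hy k)
  have hbound : Tendsto (fun k => dist (z k) z₀ + dist (w k) w₀) l (𝓝 0) := by
    simpa using (tendsto_iff_dist_tendsto_zero.1 hz).add (tendsto_iff_dist_tendsto_zero.1 hw)
  refine tendsto_iff_dist_tendsto_zero.2 (squeeze_zero (fun _ => dist_nonneg) (fun k => ?_) hbound)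
  simpa only [dist_comm] using hdist k

end RectVertices

theorem stmt_13_general (θ : ℝ)
    (γn : ℕ → Circle → ℂ) (γ : Circle → ℂ)
    (hγc : Continuous γ)
    (hconv : TendstoUniformly γn γ Filter.atTop)
    (z w : ℕ → ℂ)
    (hins : ∀ n, rectVertices θ (z n) (w n) ⊆ Set.range (γn n)) :
    ∃ ψ : ℕ → ℕ, StrictMono ψ ∧ ∃ z₀ w₀ : ℂ,
      Filter.Tendsto (z ∘ ψ) Filter.atTop (nhds z₀) ∧
      Filter.Tendsto (w ∘ ψ) Filter.atTop (nhds w₀) ∧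
      Filter.Tendsto (fun k => Metric.hausdorffDist
          (rectVertices θ (z (ψ k)) (w (ψ k))) (rectVertices θ z₀ w₀))
        Filter.atTop (nhds 0) ∧
      rectVertices θ z₀ w₀ ⊆ Set.range γ ∧
      ((z₀ = w₀ ∧ rectVertices θ z₀ w₀ = {z₀}) ∨
       (z₀ ≠ w₀ ∧ rectVertices θ z₀ w₀ ⊆ Set.range γ)) := by
  have hγ : IsCompact (range γ) := isCompact_range hγc
  set K := cthickening 1 (range γ)
  have hK : IsCompact K := hγ.cthickening
  have hfreq : ∃ᶠ n in atTop, (z n, w n) ∈ K ×ˢ K := by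
    refine Eventually.frequently ?_
    filter_upwards [hconv.eventually_range_subset_thickening one_pos] with n hn
    exact ⟨thickening_subset_cthickening _ _ (hn (hins n (.inl rfl))),
      thickening_subset_cthickening _ _ (hn (hins n (.inr (.inl rfl))))⟩
  obtain ⟨⟨z₀, w₀⟩, -, ψ, hψ, hlim⟩ := (hK.prod hK).tendsto_subseq' hfreq
  have hz : Tendsto (z ∘ ψ) atTop (𝓝 z₀) := hlim.fst_nhds
  have hw : Tendsto (w ∘ ψ) atTop (𝓝 w₀) := hlim.snd_nhds
  have hsub : rectVertices θ z₀ w₀ ⊆ range γ := by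
    rw [← hγ.isClosed.closure_eq]
    exact rectVertices_subset_closure_range θ hconv hψ.tendsto_atTop hz hw fun k => hins (ψ k)
  refine ⟨ψ, hψ, z₀, w₀, hz, hw, tendsto_hausdorffDist_rectVertices θ hz hw, hsub, ?_⟩
  by_cases h : z₀ = w₀
  · exact .inl ⟨h, h ▸ rectVertices_self θ z₀⟩
  · exact .inr ⟨h, hsub⟩

/-- If Jordan curves γ_n converge uniformly to a Jordan curve γ and each γ_n inscribes
a θ-rectangle Q_n, then along a subsequence the vertex sets of Q_n converge in the
Hausdorff metric to a subset of γ which is either a single point or the vertex set of a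
θ-rectangle inscribed in γ. -/
theorem stmt_13 (θ : ℝ) (hθ : θ ∈ Set.Ioo 0 Real.pi)
    (γn : ℕ → Circle → ℂ) (γ : Circle → ℂ)
    (hcont : ∀ n, Continuous (γn n)) (hinjn : ∀ n, Function.Injective (γn n))
    (hγc : Continuous γ) (hγi : Function.Injective γ)
    (hconv : TendstoUniformly γn γ Filter.atTop)
    (z w : ℕ → ℂ) (hzw : ∀ n, z n ≠ w n)
    (hins : ∀ n, rectVertices θ (z n) (w n) ⊆ Set.range (γn n)) :
    ∃ ψ : ℕ → ℕ, StrictMono ψ ∧ ∃ z₀ w₀ : ℂ,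
      Filter.Tendsto (z ∘ ψ) Filter.atTop (nhds z₀) ∧
      Filter.Tendsto (w ∘ ψ) Filter.atTop (nhds w₀) ∧
      Filter.Tendsto (fun k => Metric.hausdorffDist
          (rectVertices θ (z (ψ k)) (w (ψ k))) (rectVertices θ z₀ w₀))
        Filter.atTop (nhds 0) ∧
      rectVertices θ z₀ w₀ ⊆ Set.range γ ∧
      ((z₀ = w₀ ∧ rectVertices θ z₀ w₀ = {z₀}) ∨
       (z₀ ≠ w₀ ∧ rectVertices θ z₀ w₀ ⊆ Set.range γ)) :=
  stmt_13_general θ γn γ hγc hconv z w hins
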